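/- Let p_1 ≥ ⋯ ≥ p_m > 0 with n ≤ m, and let u_1,…,u_m ∈ ℂ^n form a tight frame. If Σ_{i=1}^m p_i ‖u_i‖² = Σ_{i=1}^n p_i, then ‖u_i‖² = 1 for every i with p_i > p_n, and ‖u_i‖² = 0 for every i with p_i < p_n. -/
import Mathlib

open Matrix

/-- The squared norm `⟨v, v⟩` of a vector in ℂ^n, as a real number. -/
noncomputable def nsq {n : ℕ} (v : Fin n → ℂ) : ℝ := (star v ⬝ᵥ v).re

lemma vmv_mulVec {n : ℕ} (v w x : Fin n → ℂ) : (vecMulVec v w) *ᵥ x = (w ⬝ᵥ x) • v := by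
  ext k
  simp [vecMulVec, mulVec, dotProduct, Finset.mul_sum, mul_assoc, mul_comm, mul_left_comm]

lemma trace_vmv {n : ℕ} (v w : Fin n → ℂ) : trace (vecMulVec v w) = v ⬝ᵥ w := by
  simp [trace, vecMulVec, dotProduct, diag]

lemma dotProduct_sum' {n m : ℕ} (v : Fin n → ℂ) (w : Fin m → Fin n → ℂ) :
    v ⬝ᵥ (∑ j, w j) = ∑ j, v ⬝ᵥ w j := by
  simp [dotProduct, Finset.mul_sum, Finset.sum_apply]
  rw [Finset.sum_comm]

lemma sum_mulVec' {n m : ℕ} (M : Fin m → Matrix (Fin n) (Fin n) ℂ) (x : Fin n → ℂ) :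
    (∑ j, M j) *ᵥ x = ∑ j, (M j) *ᵥ x := by
  ext k
  simp [mulVec, dotProduct, Finset.sum_apply, Finset.sum_mul, Matrix.sum_apply]
  rw [Finset.sum_comm]

lemma coe_nsq {n : ℕ} (v : Fin n → ℂ) : (nsq v : ℂ) = star v ⬝ᵥ v := by
  have h : star v ⬝ᵥ v = (∑ j, (Complex.normSq (v j) : ℂ)) := by
    simp [dotProduct, ← Complex.normSq_eq_conj_mul_self]
  rw [h]; unfold nsq; rw [h]; simp

lemma nsq_nonneg {n : ℕ} (v : Fin n → ℂ) : 0 ≤ nsq v := by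
  have : (nsq v : ℂ) = (∑ j, (Complex.normSq (v j) : ℂ)) := by
    rw [coe_nsq]; simp [dotProduct, ← Complex.normSq_eq_conj_mul_self]
  have h2 : nsq v = ∑ j, Complex.normSq (v j) := by exact_mod_cast this
  rw [h2]
  exact Finset.sum_nonneg fun j _ => Complex.normSq_nonneg _

lemma nsq_le_one {n m : ℕ} (u : Fin m → (Fin n → ℂ))
    (hu : ∑ i, vecMulVec (u i) (star (u i)) = 1) (i : Fin m) : nsq (u i) ≤ 1 := by
  have h1 : star (u i) ⬝ᵥ ((∑ j, vecMulVec (u j) (star (u j))) *ᵥ (u i))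
      = (nsq (u i) : ℂ) := by rw [hu, one_mulVec, coe_nsq]
  have h2 : star (u i) ⬝ᵥ ((∑ j, vecMulVec (u j) (star (u j))) *ᵥ (u i))
      = ∑ j, (Complex.normSq (star (u i) ⬝ᵥ u j) : ℂ) := by
    rw [sum_mulVec', dotProduct_sum']
    refine Finset.sum_congr rfl fun j _ => ?_
    rw [vmv_mulVec, dotProduct_smul]
    have hc : star (u j) ⬝ᵥ u i = (starRingEnd ℂ) (star (u i) ⬝ᵥ u j) := by
      simp [dotProduct, map_sum, mul_comm]
    rw [hc, smul_eq_mul, mul_comm, Complex.mul_conj]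
  have h3 : nsq (u i) = ∑ j, Complex.normSq (star (u i) ⬝ᵥ u j) := by
    exact_mod_cast h1.symm.trans h2
  have h5 : Complex.normSq (star (u i) ⬝ᵥ u i)
      ≤ ∑ j, Complex.normSq (star (u i) ⬝ᵥ u j) :=
    Finset.single_le_sum (f := fun j => Complex.normSq (star (u i) ⬝ᵥ u j))
      (fun j _ => Complex.normSq_nonneg _) (Finset.mem_univ i)
  have h6 : Complex.normSq (star (u i) ⬝ᵥ u i) = nsq (u i) * nsq (u i) := by
    rw [← coe_nsq, Complex.normSq_ofReal]
  rw [h6, ← h3] at h5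
  nlinarith [nsq_nonneg (u i), h5]

lemma sum_nsq_eq {n m : ℕ} (u : Fin m → (Fin n → ℂ))
    (hu : ∑ i, vecMulVec (u i) (star (u i)) = 1) : ∑ i, nsq (u i) = n := by
  have h := congrArg trace hu
  rw [trace_sum, trace_one] at h
  simp only [trace_vmv] at h
  have h2 : (∑ i, (nsq (u i) : ℂ)) = ((Fintype.card (Fin n) : ℕ) : ℂ) := by
    rw [← h]
    refine Finset.sum_congr rfl fun i _ => ?_
    rw [coe_nsq, dotProduct_comm]
  rw [Fintype.card_fin] at h2
  exact_mod_cast h2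

/-- If a tight frame attains `Σ p i ‖u i‖² = Σ_{i<n} p i`, then `‖u i‖² = 1`
whenever `p i > p n`, and `‖u i‖² = 0` whenever `p i < p n`. -/
theorem optimal_tfes_conditions {n m : ℕ} (hnm : n ≤ m) (hn : 0 < n)
    (p : Fin m → ℝ) (hp_pos : ∀ i, 0 < p i)
    (hp_mono : ∀ i j : Fin m, i ≤ j → p j ≤ p i)
    (u : Fin m → (Fin n → ℂ))
    (hu : ∑ i, vecMulVec (u i) (star (u i)) = 1)
    (hopt : ∑ i, p i * nsq (u i) =
      ∑ i ∈ Finset.univ.filter (fun i : Fin m => (i : ℕ) < n), p i) :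
    (∀ i : Fin m, p ⟨n - 1, by omega⟩ < p i → nsq (u i) = 1) ∧
    (∀ i : Fin m, p i < p ⟨n - 1, by omega⟩ → nsq (u i) = 0) := by
  set q : ℝ := p ⟨n - 1, by omega⟩ with hq
  set S := Finset.univ.filter (fun i : Fin m => (i : ℕ) < n) with hS
  have hcard : S.card = n := by
    have : S = Finset.map (Fin.castLEEmb hnm) Finset.univ := by
      ext i
      simp only [hS, Finset.mem_filter, Finset.mem_univ, true_and, Finset.mem_map,
        Fin.castLEEmb]
      constructor
      · intro h; exact ⟨⟨i, h⟩, by simp [Fin.castLE]⟩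
      · rintro ⟨j, rfl⟩; exact j.isLt
    rw [this, Finset.card_map, Finset.card_univ, Fintype.card_fin]
  have htr : ∑ i, nsq (u i) = n := sum_nsq_eq u hu
  have hle1 : ∀ i, nsq (u i) ≤ 1 := nsq_le_one u hu
  -- q ≤ p i for i < n ; p i ≤ q for n ≤ i
  have hqle : ∀ i : Fin m, (i : ℕ) < n → q ≤ p i := by
    intro i hi
    exact hp_mono i ⟨n - 1, by omega⟩ (by simp [Fin.le_def]; omega)
  have hleq : ∀ i : Fin m, n ≤ (i : ℕ) → p i ≤ q := by
    intro i hi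
    exact hp_mono ⟨n - 1, by omega⟩ i (by simp [Fin.le_def]; omega)
  -- termwise inequality
  have hfg : ∀ i ∈ Finset.univ, (p i - q) * nsq (u i)
      ≤ (if (i : ℕ) < n then p i - q else 0) := by
    intro i _
    by_cases hi : (i : ℕ) < n
    · rw [if_pos hi]
      have h1 : 0 ≤ p i - q := by linarith [hqle i hi]
      nlinarith [hle1 i, nsq_nonneg (u i)]
    · rw [if_neg hi]
      have h1 : p i - q ≤ 0 := by linarith [hleq i (by omega)]
      exact mul_nonpos_of_nonpos_of_nonneg h1 (nsq_nonneg (u i))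
  -- sum equality
  have hsum : ∑ i, (p i - q) * nsq (u i)
      = ∑ i : Fin m, (if (i : ℕ) < n then p i - q else 0) := by
    have hL : ∑ i, (p i - q) * nsq (u i)
        = (∑ i, p i * nsq (u i)) - q * (∑ i, nsq (u i)) := by
      rw [Finset.mul_sum, ← Finset.sum_sub_distrib]
      exact Finset.sum_congr rfl fun i _ => by ring
    have hR : ∑ i : Fin m, (if (i : ℕ) < n then p i - q else 0)
        = (∑ i ∈ S, p i) - q * n := by
      rw [← Finset.sum_filter, Finset.sum_sub_distrib, Finset.sum_const, ← hS, hcard]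
      ring
    rw [hL, hR, hopt, htr]
  have hterm := (Finset.sum_eq_sum_iff_of_le hfg).mp hsum
  constructor
  · intro i hqi
    have hi : (i : ℕ) < n := by
      by_contra h
      exact absurd hqi (not_lt.mpr (hleq i (by omega)))
    have := hterm i (Finset.mem_univ i)
    rw [if_pos hi] at this
    have hne : p i - q ≠ 0 := by rw [hq] at hqi ⊢; intro h; rw [sub_eq_zero] at h; linarith
    have : (p i - q) * nsq (u i) = (p i - q) * 1 := by rw [this]; ring
    exact mul_left_cancel₀ hne this
  · intro i hqi
    have hi : ¬ (i : ℕ) < n := by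
      intro h
      exact absurd hqi (not_lt.mpr (hqle i h))
    have := hterm i (Finset.mem_univ i)
    rw [if_neg hi] at this
    have hne : p i - q ≠ 0 := by rw [hq] at hqi ⊢; intro h; rw [sub_eq_zero] at h; linarith
    exact (mul_eq_zero.mp this).resolve_left hne
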